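/- arXiv:2303.17192 — 12 statements merged into one kernel-verified Lean document; each statement's English description precedes it below -/
import Mathlib

section
/- One-iteration estimate for the extragradient template: let F : ℝ^p → ℝ^p, let η > 0, β ∈ (0,1], γ > 0, and let x^{k}, u^k ∈ ℝ^p. Define y^k := x^k - (η/β) u^k and x^{k+1} := x^k - η F y^k. Then for any x̂ ∈ ℝ^p: ‖x^{k+1} - x̂‖² ≤ ‖x^k - x̂‖² - β‖y^k - x^k‖² + (η²/γ)‖F y^k - u^k‖² - 2η⟨F y^k, y^k - x̂⟩ - (β - γ)‖x^{k+1} - y^k‖² - (1 - β)‖x^{k+1} - x^k‖². -/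
/-!
Since `η • u = β • (x - y)`, the step `x⁺ = x - η • F y` splits the cross term `⟪F y, x⁺ - x̂⟫`
into `⟪F y, y - x̂⟫`, a term `⟪F y - u, x⁺ - y⟫` bounded by Cauchy–Schwarz and Young's inequality
with weight `γ`, and `β ⟪x - y, x⁺ - y⟫`, which the polarization identity turns into squared
distances; the same identity expands `‖x⁺ - x̂‖²` around `x`.
-/

open scoped RealInnerProductSpace

section

variable {E : Type*} [NormedAddCommGroup E] [InnerProductSpace ℝ E]

theorem two_mul_real_inner_sub_sub_eq (a b c : E) :
    2 * ⟪a - b, a - c⟫ = ‖a - b‖ ^ 2 + ‖a - c‖ ^ 2 - ‖b - c‖ ^ 2 := by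
  have h := norm_sub_sq_real (a - b) (a - c)
  rw [sub_sub_sub_cancel_left, norm_sub_rev c b] at h
  linarith

theorem two_mul_real_inner_le_mul_norm_sq_add {γ : ℝ} (hγ : 0 < γ) (a b : E) :
    2 * ⟪a, b⟫ ≤ γ * ‖a‖ ^ 2 + γ⁻¹ * ‖b‖ ^ 2 := by
  have h := two_mul_le_add_mul_sq (a := ‖a‖) (b := ‖b‖) hγ
  nlinarith [real_inner_le_norm a b]

end

theorem eg_one_iteration_estimate_general {p : ℕ}
    (F : EuclideanSpace ℝ (Fin p) → EuclideanSpace ℝ (Fin p))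
    (η β γ : ℝ) (hβ0 : 0 < β) (hγ : 0 < γ)
    (xk uk yk xk1 : EuclideanSpace ℝ (Fin p))
    (hy : yk = xk - (η / β) • uk) (hx : xk1 = xk - η • F yk)
    (xhat : EuclideanSpace ℝ (Fin p)) :
    ‖xk1 - xhat‖ ^ 2 ≤ ‖xk - xhat‖ ^ 2 - β * ‖yk - xk‖ ^ 2
      + (η ^ 2 / γ) * ‖F yk - uk‖ ^ 2 - 2 * η * ⟪F yk, yk - xhat⟫
      - (β - γ) * ‖xk1 - yk‖ ^ 2 - (1 - β) * ‖xk1 - xk‖ ^ 2 := by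
  set g := F yk
  have hu : η • uk = β • (xk - yk) := by
    rw [hy, sub_sub_cancel, smul_smul, mul_div_cancel₀ _ hβ0.ne']
  have hstep : ⟪xk1 - xk, xk1 - xhat⟫ = -(η * ⟪g, xk1 - xhat⟫) := by
    rw [hx, sub_sub_cancel_left, inner_neg_left, real_inner_smul_left]
  have hexpand := two_mul_real_inner_sub_sub_eq xk1 xk xhat
  have hpolar := two_mul_real_inner_sub_sub_eq yk xk xk1
  have hyoung := two_mul_real_inner_le_mul_norm_sq_add hγ (xk1 - yk) (η • (uk - g))
  have hsplit : η * ⟪g, xk1 - xhat⟫ = η * ⟪g, yk - xhat⟫ - ⟪xk1 - yk, η • (uk - g)⟫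
      + β * ⟪yk - xk, yk - xk1⟫ := by
    have hdecomp : xk1 - xhat = (yk - xhat) + (xk1 - yk) := by abel
    rw [hdecomp, inner_add_right, smul_sub, hu, inner_sub_right (xk1 - yk),
      real_inner_smul_right, real_inner_smul_right, real_inner_comm g, ← neg_sub xk yk,
      ← neg_sub xk1 yk, inner_neg_neg, real_inner_comm (xk - yk)]
    ring
  rw [norm_smul, mul_pow, Real.norm_eq_abs, sq_abs, norm_sub_rev uk g] at hyoung
  rw [norm_sub_rev yk xk1, norm_sub_rev xk xk1] at hpolar
  rw [hstep] at hexpand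
  linear_combination hyoung - hexpand - 2 * hsplit - β * hpolar

/-- One-iteration estimate for the extragradient template. -/
theorem eg_one_iteration_estimate {p : ℕ}
    (F : EuclideanSpace ℝ (Fin p) → EuclideanSpace ℝ (Fin p))
    (η β γ : ℝ) (hη : 0 < η) (hβ0 : 0 < β) (hβ1 : β ≤ 1) (hγ : 0 < γ)
    (xk uk yk xk1 : EuclideanSpace ℝ (Fin p))
    (hy : yk = xk - (η / β) • uk) (hx : xk1 = xk - η • F yk)
    (xhat : EuclideanSpace ℝ (Fin p)) :
    ‖xk1 - xhat‖ ^ 2 ≤ ‖xk - xhat‖ ^ 2 - β * ‖yk - xk‖ ^ 2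
      + (η ^ 2 / γ) * ‖F yk - uk‖ ^ 2 - 2 * η * ⟪F yk, yk - xhat⟫
      - (β - γ) * ‖xk1 - yk‖ ^ 2 - (1 - β) * ‖xk1 - xk‖ ^ 2 :=
  eg_one_iteration_estimate_general F η β γ hβ0 hγ xk uk yk xk1 hy hx xhat
end

section
/- Co-hypomonotone residual monotonicity estimate: let F : ℝ^p → ℝ^p be ρ-co-hypomonotone (⟨Fx - Fy, x - y⟩ ≥ -ρ‖Fx - Fy‖² for all x, y, with ρ ≥ 0) and L-Lipschitz continuous. Given η > 0, β ∈ (0,1], u^k ∈ ℝ^p, set y^k := x^k - (η/β)u^k and x^{k+1} := x^k - η F y^k. Then for any c > 0 and ω ≥ 1: ‖F x^{k+1}‖² ≤ ‖F x^k‖² - ((cη - 2(1+c)ρ)/(cη))‖F y^k - F x^k‖² + ((ηω + 2(1+c)ρ) L² η / β²)‖β F y^k - u^k‖² - (ω - 1)‖F x^{k+1} - F y^k‖². -/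
/-!
Expand `‖F x⁺‖²` around `F x`: the cross term `⟪F x⁺ - F x, F y⟫` is controlled by
co-hypomonotonicity along the step `x⁺ - x = -η F y`, the resulting `‖F x⁺ - F x‖²` is split
between `‖F y - F x‖²` and `‖F x⁺ - F y‖²` by Young's inequality with weight `c`, and
`‖F x⁺ - F y‖²` is bounded by Lipschitz continuity along `x⁺ - y = -(η/β)(β F y - u)`.
-/

open scoped RealInnerProductSpace

theorem mul_norm_add_sq_le {G : Type*} [SeminormedAddGroup G] {c : ℝ} (hc : 0 ≤ c) (u v : G) :
    c * ‖u + v‖ ^ 2 ≤ (1 + c) * ‖u‖ ^ 2 + c * (1 + c) * ‖v‖ ^ 2 := by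
  have h_sq : ‖u + v‖ ^ 2 ≤ (‖u‖ + ‖v‖) ^ 2 := by
    gcongr
    exact norm_add_le u v
  nlinarith [mul_le_mul_of_nonneg_left h_sq hc, sq_nonneg (‖u‖ - c * ‖v‖)]

section ExtragradientStep

variable {E : Type*} [NormedAddCommGroup E] [InnerProductSpace ℝ E]

theorem norm_sq_eq_norm_sq_add_two_inner_sub_sub_add (a b d : E) :
    ‖a‖ ^ 2 = ‖d‖ ^ 2 + 2 * ⟪a - d, b⟫ - ‖b - d‖ ^ 2 + ‖a - b‖ ^ 2 := by
  rw [norm_sub_sq_real, norm_sub_sq_real, inner_sub_left, real_inner_comm d b]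
  ring

variable {F : E → E} {ρ L η β : ℝ} {x u y x₁ : E}

theorem inner_step_le_of_cohypomonotone
    (hco : ∀ x y, -ρ * ‖F x - F y‖ ^ 2 ≤ ⟪F x - F y, x - y⟫) (hx : x₁ = x - η • F y) :
    η * ⟪F x₁ - F x, F y⟫ ≤ ρ * ‖F x₁ - F x‖ ^ 2 := by
  have h := hco x₁ x
  rw [hx, sub_sub_cancel_left, inner_neg_right, real_inner_smul_right] at h
  rw [hx]
  linarith

theorem norm_sq_step_sub_le_of_lipschitz (hL : ∀ x y, ‖F x - F y‖ ≤ L * ‖x - y‖) (hβ : β ≠ 0)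
    (hy : y = x - (η / β) • u) (hx : x₁ = x - η • F y) :
    β ^ 2 * ‖F x₁ - F y‖ ^ 2 ≤ L ^ 2 * η ^ 2 * ‖β • F y - u‖ ^ 2 := by
  have h_step : x₁ - y = -((η / β) • (β • F y - u)) := by
    rw [hx, hy, smul_sub, smul_smul, div_mul_cancel₀ η hβ]
    abel
  calc β ^ 2 * ‖F x₁ - F y‖ ^ 2 ≤ β ^ 2 * (L * ‖x₁ - y‖) ^ 2 := by gcongr; exact hL x₁ y
    _ = L ^ 2 * η ^ 2 * ‖β • F y - u‖ ^ 2 := by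
      rw [h_step, norm_neg, norm_smul, Real.norm_eq_abs, mul_pow, mul_pow, sq_abs]
      field_simp

end ExtragradientStep

theorem eg_cohypomonotone_residual_estimate_general {p : ℕ}
    (F : EuclideanSpace ℝ (Fin p) → EuclideanSpace ℝ (Fin p))
    (ρ L : ℝ) (hρ : 0 ≤ ρ)
    (hco : ∀ x y, -ρ * ‖F x - F y‖ ^ 2 ≤ ⟪F x - F y, x - y⟫)
    (hL : ∀ x y, ‖F x - F y‖ ≤ L * ‖x - y‖)
    (η β : ℝ) (hη : 0 < η) (hβ0 : 0 < β)
    (xk uk yk xk1 : EuclideanSpace ℝ (Fin p))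
    (hy : yk = xk - (η / β) • uk) (hx : xk1 = xk - η • F yk)
    (c ω : ℝ) (hc : 0 < c) (hω : 1 ≤ ω) :
    ‖F xk1‖ ^ 2 ≤ ‖F xk‖ ^ 2
      - ((c * η - 2 * (1 + c) * ρ) / (c * η)) * ‖F yk - F xk‖ ^ 2
      + ((η * ω + 2 * (1 + c) * ρ) * L ^ 2 * η / β ^ 2) * ‖β • F yk - uk‖ ^ 2
      - (ω - 1) * ‖F xk1 - F yk‖ ^ 2 := by
  have h_expand := norm_sq_eq_norm_sq_add_two_inner_sub_sub_add (F xk1) (F yk) (F xk)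
  have h_cross := inner_step_le_of_cohypomonotone hco hx
  have h_young := mul_norm_add_sq_le hc.le (F yk - F xk) (F xk1 - F yk)
  rw [sub_add_sub_cancel'] at h_young
  have h_lip := norm_sq_step_sub_le_of_lipschitz hL hβ0.ne' hy hx
  field_simp
  linear_combination β ^ 2 * (c * η * h_expand + 2 * c * h_cross + 2 * ρ * h_young)
    + c * (η * ω + 2 * (1 + c) * ρ) * h_lip

/-- Co-hypomonotone residual monotonicity estimate for the extragradient template. -/
theorem eg_cohypomonotone_residual_estimate {p : ℕ}
    (F : EuclideanSpace ℝ (Fin p) → EuclideanSpace ℝ (Fin p))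
    (ρ L : ℝ) (hρ : 0 ≤ ρ)
    (hco : ∀ x y, -ρ * ‖F x - F y‖ ^ 2 ≤ ⟪F x - F y, x - y⟫)
    (hL : ∀ x y, ‖F x - F y‖ ≤ L * ‖x - y‖)
    (η β : ℝ) (hη : 0 < η) (hβ0 : 0 < β) (hβ1 : β ≤ 1)
    (xk uk yk xk1 : EuclideanSpace ℝ (Fin p))
    (hy : yk = xk - (η / β) • uk) (hx : xk1 = xk - η • F yk)
    (c ω : ℝ) (hc : 0 < c) (hω : 1 ≤ ω) :
    ‖F xk1‖ ^ 2 ≤ ‖F xk‖ ^ 2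
      - ((c * η - 2 * (1 + c) * ρ) / (c * η)) * ‖F yk - F xk‖ ^ 2
      + ((η * ω + 2 * (1 + c) * ρ) * L ^ 2 * η / β ^ 2) * ‖β • F yk - uk‖ ^ 2
      - (ω - 1) * ‖F xk1 - F yk‖ ^ 2 :=
  eg_cohypomonotone_residual_estimate_general F ρ L hρ hco hL η β hη hβ0 xk uk yk xk1 hy hx c ω hc
    hω
end

section
/- Last-iterate monotone decrease for EG under co-hypomonotonicity: let F : ℝ^p → ℝ^p be ρ-co-hypomonotone and L-Lipschitz. Consider y^k := x^k - η F x^k, x^{k+1} := x^k - η F y^k (i.e. β = 1). If ψ := 1 - 4ρ/η - L²η(η + 4ρ) > 0, then ‖F x^{k+1}‖² ≤ ‖F x^k‖² - ψ‖F y^k - F x^k‖². In particular the sequence (‖F x^k‖) is nonincreasing. -/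
/-!
Write `a = F xₖ`, `b = F yₖ`, `c = F xₖ₊₁`. Since `xₖ₊₁ - xₖ = -η b` and `xₖ₊₁ - yₖ = η (a - b)`,
co-hypomonotonicity at `(xₖ₊₁, xₖ)` gives `η ⟪c - a, b⟫ ≤ ρ ‖c - a‖²` and the Lipschitz bound at
`(xₖ₊₁, yₖ)` gives `‖c - b‖ ≤ L η ‖b - a‖`. Inserting both, together with
`‖c - a‖² ≤ 2 ‖c - b‖² + 2 ‖b - a‖²`, into the identity
`‖c‖² - ‖a‖² = ‖c - b‖² - ‖b - a‖² + 2 ⟪c - a, b⟫` yields the decrease.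
-/

open scoped RealInnerProductSpace

theorem norm_sub_sq_le_two_mul {E : Type*} [SeminormedAddCommGroup E] (a b c : E) :
    ‖c - a‖ ^ 2 ≤ 2 * (‖c - b‖ ^ 2 + ‖b - a‖ ^ 2) :=
  calc ‖c - a‖ ^ 2 ≤ (‖c - b‖ + ‖b - a‖) ^ 2 :=
        pow_le_pow_left₀ (norm_nonneg _) (norm_sub_le_norm_sub_add_norm_sub c b a) 2
    _ ≤ 2 * (‖c - b‖ ^ 2 + ‖b - a‖ ^ 2) := add_sq_le

section InnerProduct

variable {E : Type*} [NormedAddCommGroup E] [InnerProductSpace ℝ E]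

theorem norm_sq_sub_norm_sq_eq (a b c : E) :
    ‖c‖ ^ 2 - ‖a‖ ^ 2 = ‖c - b‖ ^ 2 - ‖b - a‖ ^ 2 + 2 * ⟪c - a, b⟫ := by
  simp only [norm_sub_sq_real, inner_sub_left, real_inner_comm a b]
  ring

theorem norm_sq_le_of_inner_le_of_norm_sub_le {ρ L η : ℝ} (hρ : 0 ≤ ρ) (hη : 0 < η)
    {a b c : E} (hco : η * ⟪c - a, b⟫ ≤ ρ * ‖c - a‖ ^ 2)
    (hL : ‖c - b‖ ≤ L * η * ‖b - a‖) :
    ‖c‖ ^ 2 ≤ ‖a‖ ^ 2 - (1 - 4 * ρ / η - L ^ 2 * η * (η + 4 * ρ)) * ‖b - a‖ ^ 2 := by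
  have hL_sq : ‖c - b‖ ^ 2 ≤ L ^ 2 * η ^ 2 * ‖b - a‖ ^ 2 := by
    have := pow_le_pow_left₀ (norm_nonneg _) hL 2
    linarith [show (L * η * ‖b - a‖) ^ 2 = L ^ 2 * η ^ 2 * ‖b - a‖ ^ 2 by ring]
  have h_young := mul_le_mul_of_nonneg_left (norm_sub_sq_le_two_mul a b c) hρ
  have h_lip := mul_le_mul_of_nonneg_left hL_sq (by positivity : 0 ≤ η + 4 * ρ)
  have key : η * (‖c‖ ^ 2 - ‖a‖ ^ 2)
      ≤ -(η - 4 * ρ - L ^ 2 * η ^ 2 * (η + 4 * ρ)) * ‖b - a‖ ^ 2 := by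
    linear_combination η * norm_sq_sub_norm_sq_eq a b c + 2 * hco + 2 * h_young + h_lip
  have hψη : (1 - 4 * ρ / η - L ^ 2 * η * (η + 4 * ρ)) * η
      = η - 4 * ρ - L ^ 2 * η ^ 2 * (η + 4 * ρ) := by
    field_simp
  refine le_of_mul_le_mul_left ?_ hη
  linear_combination key + ‖b - a‖ ^ 2 * hψη

theorem extragradient_norm_sq_le {F : E → E} {ρ L η : ℝ} (hρ : 0 ≤ ρ) (hη : 0 < η)
    (hco : ∀ x y, -ρ * ‖F x - F y‖ ^ 2 ≤ ⟪F x - F y, x - y⟫)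
    (hL : ∀ x y, ‖F x - F y‖ ≤ L * ‖x - y‖)
    {x y x' : E} (hy : y = x - η • F x) (hx' : x' = x - η • F y) :
    ‖F x'‖ ^ 2 ≤ ‖F x‖ ^ 2 - (1 - 4 * ρ / η - L ^ 2 * η * (η + 4 * ρ)) * ‖F y - F x‖ ^ 2 := by
  have h_step : x' - x = -(η • F y) := by rw [hx', sub_sub_cancel_left]
  have h_gap : x' - y = η • (F x - F y) := by rw [hx', hy, sub_sub_sub_cancel_left, smul_sub]
  refine norm_sq_le_of_inner_le_of_norm_sub_le hρ hη ?_ ?_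
  · have h := hco x' x
    rwa [h_step, inner_neg_right, real_inner_smul_right, neg_mul, neg_le_neg_iff] at h
  · have h := hL x' y
    rwa [h_gap, norm_smul, Real.norm_of_nonneg hη.le, norm_sub_rev (F x), ← mul_assoc] at h

end InnerProduct

/-- Last-iterate monotone decrease for EG under co-hypomonotonicity. -/
theorem eg_last_iterate_decrease_cohypomonotone {p : ℕ}
    (F : EuclideanSpace ℝ (Fin p) → EuclideanSpace ℝ (Fin p))
    (ρ L η : ℝ) (hρ : 0 ≤ ρ) (hη : 0 < η)
    (hco : ∀ x y, -ρ * ‖F x - F y‖ ^ 2 ≤ ⟪F x - F y, x - y⟫)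
    (hL : ∀ x y, ‖F x - F y‖ ≤ L * ‖x - y‖)
    (hψ : 0 < 1 - 4 * ρ / η - L ^ 2 * η * (η + 4 * ρ))
    (x y : ℕ → EuclideanSpace ℝ (Fin p))
    (hy : ∀ k, y k = x k - η • F (x k))
    (hx : ∀ k, x (k + 1) = x k - η • F (y k)) :
    (∀ k : ℕ, ‖F (x (k + 1))‖ ^ 2 ≤ ‖F (x k)‖ ^ 2
        - (1 - 4 * ρ / η - L ^ 2 * η * (η + 4 * ρ)) * ‖F (y k) - F (x k)‖ ^ 2)
    ∧ (∀ k : ℕ, ‖F (x (k + 1))‖ ≤ ‖F (x k)‖) := by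
  have decrease k := extragradient_norm_sq_le hρ hη hco hL (hy k) (hx k)
  refine ⟨decrease, fun k => ?_⟩
  have h_sq : ‖F (x (k + 1))‖ ^ 2 ≤ ‖F (x k)‖ ^ 2 :=
    (decrease k).trans (sub_le_self _ (mul_nonneg hψ.le (sq_nonneg _)))
  exact (pow_le_pow_iff_left₀ (norm_nonneg _) (norm_nonneg _) two_ne_zero).mp h_sq
end

section
/- Linear convergence of EG under star-strong monotonicity: let F : ℝ^p → ℝ^p be L-Lipschitz with F x⋆ = 0, and μ-star-strongly monotone at x⋆: ⟨Fx, x - x⋆⟩ ≥ μ‖x - x⋆‖² for all x, where 0 < μ ≤ L. For the EG iteration y^k := x^k - η F x^k, x^{k+1} := x^k - η F y^k with 0 < η < 1/L, one has ‖x^{k+1} - x⋆‖² ≤ (1 - η²(1 - L²η²)μ²)‖x^k - x⋆‖², and the contraction factor φ := 1 - η²(1 - L²η²)μ² lies in (0,1). -/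
/-!
Expanding the extragradient step around any point `z` gives the exact identity
`‖x⁺ - z‖² = ‖x - z‖² - 2η⟪F y, y - z⟫ + η²‖F y - F x‖² - η²‖F x‖²`.
For `z = x⋆` star-strong monotonicity makes the inner product nonnegative, Lipschitz continuity
bounds `‖F y - F x‖` by `Lη‖F x‖`, and star-strong monotonicity with Cauchy–Schwarz bounds
`‖F x‖` below by `μ‖x - x⋆‖`.
-/

open scoped RealInnerProductSpace

section Extragradient

variable {E : Type*} [NormedAddCommGroup E] [InnerProductSpace ℝ E]

theorem mul_norm_le_norm_of_mul_norm_sq_le_inner {μ : ℝ} {a b : E}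
    (h : μ * ‖a‖ ^ 2 ≤ ⟪b, a⟫) : μ * ‖a‖ ≤ ‖b‖ := by
  rcases eq_or_ne a 0 with rfl | ha
  · simp
  refine le_of_mul_le_mul_right ?_ (norm_pos_iff.2 ha)
  calc μ * ‖a‖ * ‖a‖ = μ * ‖a‖ ^ 2 := by ring
    _ ≤ ⟪b, a⟫ := h
    _ ≤ ‖b‖ * ‖a‖ := real_inner_le_norm b a

theorem norm_sub_smul_sub_sq_eq (x z u v : E) (η : ℝ) :
    ‖x - η • u - z‖ ^ 2 = ‖x - z‖ ^ 2 - 2 * η * ⟪u, x - η • v - z⟫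
      + η ^ 2 * ‖u - v‖ ^ 2 - η ^ 2 * ‖v‖ ^ 2 := by
  simp only [← real_inner_self_eq_norm_sq, inner_sub_left, inner_sub_right, real_inner_smul_left,
    real_inner_smul_right, real_inner_comm u v, real_inner_comm u x, real_inner_comm u z,
    real_inner_comm x z]
  ring

theorem norm_extragradient_sub_sq_le {F : E → E} {L η : ℝ}
    (hL : ∀ u v, ‖F u - F v‖ ≤ L * ‖u - v‖) (hη : 0 ≤ η) {x z : E}
    (hz : 0 ≤ ⟪F (x - η • F x), x - η • F x - z⟫) :
    ‖x - η • F (x - η • F x) - z‖ ^ 2 ≤ ‖x - z‖ ^ 2 - η ^ 2 * (1 - L ^ 2 * η ^ 2) * ‖F x‖ ^ 2 := by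
  have hlip : ‖F (x - η • F x) - F x‖ ≤ L * η * ‖F x‖ := by
    simpa [norm_smul, abs_of_nonneg hη, mul_assoc] using hL (x - η • F x) x
  have hlip_sq : ‖F (x - η • F x) - F x‖ ^ 2 ≤ L ^ 2 * η ^ 2 * ‖F x‖ ^ 2 := by
    calc _ ≤ (L * η * ‖F x‖) ^ 2 := pow_le_pow_left₀ (norm_nonneg _) hlip 2
      _ = _ := by ring
  rw [norm_sub_smul_sub_sq_eq x z _ (F x) η]
  linarith [mul_le_mul_of_nonneg_left hlip_sq (sq_nonneg η), mul_nonneg hη hz]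

end Extragradient

theorem extragradient_factor_mem_Ioo {L μ η : ℝ} (hμ : 0 < μ) (hμL : μ ≤ L) (hη : 0 < η)
    (hLη : L * η < 1) : 1 - η ^ 2 * (1 - L ^ 2 * η ^ 2) * μ ^ 2 ∈ Set.Ioo 0 1 := by
  have hLη₀ : 0 < L * η := mul_pos (hμ.trans_le hμL) hη
  have hμη : μ * η < 1 := (mul_le_mul_of_nonneg_right hμL hη.le).trans_lt hLη
  have hgap : 0 < 1 - L ^ 2 * η ^ 2 := by nlinarith
  constructor
  · nlinarith [mul_pos hμ hη, sq_nonneg (μ * η * (L * η))]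
  · nlinarith [mul_pos (mul_pos (pow_pos hη 2) hgap) (pow_pos hμ 2)]

theorem eg_linear_convergence_star_strongly_monotone_general {p : ℕ}
    (F : EuclideanSpace ℝ (Fin p) → EuclideanSpace ℝ (Fin p))
    (L μ η : ℝ) (hL : ∀ x y, ‖F x - F y‖ ≤ L * ‖x - y‖)
    (xs : EuclideanSpace ℝ (Fin p))
    (hμ0 : 0 < μ) (hμL : μ ≤ L)
    (hsm : ∀ x, μ * ‖x - xs‖ ^ 2 ≤ ⟪F x, x - xs⟫)
    (hη0 : 0 < η) (hη1 : η < 1 / L)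
    (x y : ℕ → EuclideanSpace ℝ (Fin p))
    (hy : ∀ k, y k = x k - η • F (x k))
    (hx : ∀ k, x (k + 1) = x k - η • F (y k)) :
    (∀ k : ℕ, ‖x (k + 1) - xs‖ ^ 2
        ≤ (1 - η ^ 2 * (1 - L ^ 2 * η ^ 2) * μ ^ 2) * ‖x k - xs‖ ^ 2)
    ∧ 0 < 1 - η ^ 2 * (1 - L ^ 2 * η ^ 2) * μ ^ 2
    ∧ 1 - η ^ 2 * (1 - L ^ 2 * η ^ 2) * μ ^ 2 < 1 := by
  have hLη : L * η < 1 := by rwa [lt_div_iff₀ (hμ0.trans_le hμL), mul_comm] at hη1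
  obtain ⟨hpos, hlt⟩ := extragradient_factor_mem_Ioo hμ0 hμL hη0 hLη
  refine ⟨fun k => ?_, hpos, hlt⟩
  have hgap : 0 ≤ η ^ 2 * (1 - L ^ 2 * η ^ 2) := by nlinarith
  have hFx : μ * ‖x k - xs‖ ≤ ‖F (x k)‖ := mul_norm_le_norm_of_mul_norm_sq_le_inner (hsm (x k))
  have hstar : 0 ≤ ⟪F (x k - η • F (x k)), x k - η • F (x k) - xs⟫ :=
    (mul_nonneg hμ0.le (sq_nonneg _)).trans (hsm _)
  rw [hx k, hy k]
  calc _ ≤ ‖x k - xs‖ ^ 2 - η ^ 2 * (1 - L ^ 2 * η ^ 2) * ‖F (x k)‖ ^ 2 :=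
        norm_extragradient_sub_sq_le hL hη0.le hstar
    _ ≤ ‖x k - xs‖ ^ 2 - η ^ 2 * (1 - L ^ 2 * η ^ 2) * (μ * ‖x k - xs‖) ^ 2 := by
        gcongr
    _ = _ := by ring

/-- Linear convergence of EG under star-strong monotonicity. -/
theorem eg_linear_convergence_star_strongly_monotone {p : ℕ}
    (F : EuclideanSpace ℝ (Fin p) → EuclideanSpace ℝ (Fin p))
    (L μ η : ℝ) (hL : ∀ x y, ‖F x - F y‖ ≤ L * ‖x - y‖)
    (xs : EuclideanSpace ℝ (Fin p)) (hxs : F xs = 0)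
    (hμ0 : 0 < μ) (hμL : μ ≤ L)
    (hsm : ∀ x, μ * ‖x - xs‖ ^ 2 ≤ ⟪F x, x - xs⟫)
    (hη0 : 0 < η) (hη1 : η < 1 / L)
    (x y : ℕ → EuclideanSpace ℝ (Fin p))
    (hy : ∀ k, y k = x k - η • F (x k))
    (hx : ∀ k, x (k + 1) = x k - η • F (y k)) :
    (∀ k : ℕ, ‖x (k + 1) - xs‖ ^ 2
        ≤ (1 - η ^ 2 * (1 - L ^ 2 * η ^ 2) * μ ^ 2) * ‖x k - xs‖ ^ 2)
    ∧ 0 < 1 - η ^ 2 * (1 - L ^ 2 * η ^ 2) * μ ^ 2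
    ∧ 1 - η ^ 2 * (1 - L ^ 2 * η ^ 2) * μ ^ 2 < 1 :=
  eg_linear_convergence_star_strongly_monotone_general F L μ η hL xs hμ0 hμL hsm hη0 hη1 x y hy hx
end

section
/- Last-iterate decrease of residual for EG on monotone inclusions: let F : ℝ^p → ℝ^p be monotone and L-Lipschitz with Lη ≤ 1, let T be 3-cyclically monotone, and suppose points satisfy ξ^{k+1} ∈ T x^{k+1}, ξ^k ∈ T x^k, ζ^k ∈ T y^k, together with x^{k+1} - x^k = -η(F y^k + ξ^{k+1}) and x^k - y^k = η(F x^k + ζ^k). Define w^k := F x^k + ξ^k, w^{k+1} := F x^{k+1} + ξ^{k+1}, ŵ^{k+1} := F y^k + ξ^{k+1}, w̃^k := F x^k + ζ^k. Then ‖w^{k+1}‖² ≤ ‖w^k‖² - (1 - L²η²)‖ŵ^{k+1} - w̃^k‖² - ‖w^k - w̃^k‖². In particular ‖F x^{k+1} + ξ^{k+1}‖ ≤ ‖F x^k + ξ^k‖. -/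
/-!
Write `w = F xᵏ + ξᵏ`, `w' = F xᵏ⁺¹ + ξᵏ⁺¹`, `ŵ = F yᵏ + ξᵏ⁺¹` and `w̃ = F xᵏ + ζᵏ`. The two
update rules say `xᵏ - xᵏ⁺¹ = η ŵ`, `xᵏ - yᵏ = η w̃` and `yᵏ - xᵏ⁺¹ = η (ŵ - w̃)`, so monotonicity
of `F` along `(xᵏ, xᵏ⁺¹)` plus 3-cyclic monotonicity of `T` along `(xᵏ⁺¹, xᵏ, yᵏ)` is `η` times
`⟪w + ŵ - w̃, w̃⟫ - ⟪w', ŵ⟫ ≥ 0`. Polarising turns this into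
`‖w'‖² ≤ ‖w‖² - ‖ŵ - w̃‖² - ‖w - w̃‖² + ‖w' - ŵ‖²`, and the last term is `‖F xᵏ⁺¹ - F yᵏ‖²`,
at most `L²η² ‖ŵ - w̃‖²` by the Lipschitz bound.
-/

open scoped RealInnerProductSpace

section

variable {E : Type*} [NormedAddCommGroup E] [InnerProductSpace ℝ E]

theorem norm_sq_le_of_inner_le_inner {a b c d : E} (h : ⟪b, c⟫ ≤ ⟪a + c - d, d⟫) :
    ‖b‖ ^ 2 ≤ ‖a‖ ^ 2 - ‖c - d‖ ^ 2 - ‖a - d‖ ^ 2 + ‖b - c‖ ^ 2 := by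
  rw [inner_sub_left, inner_add_left, real_inner_self_eq_norm_sq] at h
  rw [norm_sub_sq_real b c, norm_sub_sq_real c d, norm_sub_sq_real a d]
  linarith

theorem extragradient_inner_le {F : E → E} {η : ℝ} (hη : 0 < η) {x x' y ξ ξ' ζ : E}
    (hx : x' - x = -(η • (F y + ξ'))) (hy : x - y = η • (F x + ζ))
    (hmono : 0 ≤ ⟪F x - F x', x - x'⟫)
    (hcyc : 0 ≤ ⟪ξ', x' - x⟫ + ⟪ξ, x - y⟫ + ⟪ζ, y - x'⟫) :
    ⟪F x' + ξ', F y + ξ'⟫ ≤ ⟪(F x + ξ) + (F y + ξ') - (F x + ζ), F x + ζ⟫ := by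
  have hx' : x - x' = η • (F y + ξ') := by rw [← neg_sub, hx, neg_neg]
  have hyx' : y - x' = η • ((F y + ξ') - (F x + ζ)) := by
    rw [smul_sub, ← hx', ← hy]; abel
  have key : η * (⟪(F x + ξ) + (F y + ξ') - (F x + ζ), F x + ζ⟫ - ⟪F x' + ξ', F y + ξ'⟫) =
      ⟪F x - F x', x - x'⟫ + (⟪ξ', x' - x⟫ + ⟪ξ, x - y⟫ + ⟪ζ, y - x'⟫) := by
    rw [hx, hx', hy, hyx']
    simp only [inner_neg_right, real_inner_smul_right, inner_add_left, inner_add_right,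
      inner_sub_left, inner_sub_right]
    linear_combination η * (real_inner_comm (F x) (F y) + real_inner_comm (F x) ξ'
      + real_inner_comm ζ (F y) + real_inner_comm ζ ξ')
  have hprod : 0 ≤ η * (⟪(F x + ξ) + (F y + ξ') - (F x + ζ), F x + ζ⟫ -
      ⟪F x' + ξ', F y + ξ'⟫) := by
    rw [key]; positivity
  exact sub_nonneg.mp ((mul_nonneg_iff_of_pos_left hη).mp hprod)

theorem norm_sub_le_of_lipschitz_of_extragradient {F : E → E} {L η : ℝ} (hη : 0 ≤ η)
    (hL : ∀ x y, ‖F x - F y‖ ≤ L * ‖x - y‖) {x x' y ξ' ζ : E}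
    (hx : x' - x = -(η • (F y + ξ'))) (hy : x - y = η • (F x + ζ)) :
    ‖(F x' + ξ') - (F y + ξ')‖ ≤ L * η * ‖(F y + ξ') - (F x + ζ)‖ := by
  have hx'y : x' - y = η • ((F x + ζ) - (F y + ξ')) := by
    rw [smul_sub, ← hy, sub_eq_add_neg (x - y), ← hx]; abel
  calc ‖(F x' + ξ') - (F y + ξ')‖ = ‖F x' - F y‖ := by rw [add_sub_add_right_eq_sub]
    _ ≤ L * ‖x' - y‖ := hL x' y
    _ = L * η * ‖(F y + ξ') - (F x + ζ)‖ := by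
      rw [hx'y, norm_smul, Real.norm_of_nonneg hη, norm_sub_rev, mul_assoc]

end

/-- Last-iterate decrease of the residual for EG on monotone inclusions. -/
theorem eg_inclusion_last_iterate_decrease {p : ℕ}
    (F : EuclideanSpace ℝ (Fin p) → EuclideanSpace ℝ (Fin p))
    (T : EuclideanSpace ℝ (Fin p) → Set (EuclideanSpace ℝ (Fin p)))
    (L η : ℝ) (hη : 0 < η)
    (hmono : ∀ x y, 0 ≤ ⟪F x - F y, x - y⟫)
    (hL : ∀ x y, ‖F x - F y‖ ≤ L * ‖x - y‖)
    (hLη : L * η ≤ 1)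
    (h3 : ∀ x1 u1 x2 u2 x3 u3, u1 ∈ T x1 → u2 ∈ T x2 → u3 ∈ T x3 →
      0 ≤ ⟪u1, x1 - x2⟫ + ⟪u2, x2 - x3⟫ + ⟪u3, x3 - x1⟫)
    (xk xk1 yk ξk ξk1 ζk : EuclideanSpace ℝ (Fin p))
    (hξk : ξk ∈ T xk) (hξk1 : ξk1 ∈ T xk1) (hζk : ζk ∈ T yk)
    (hx : xk1 - xk = -(η • (F yk + ξk1)))
    (hy : xk - yk = η • (F xk + ζk)) :
    ‖F xk1 + ξk1‖ ^ 2 ≤ ‖F xk + ξk‖ ^ 2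
        - (1 - L ^ 2 * η ^ 2) * ‖(F yk + ξk1) - (F xk + ζk)‖ ^ 2
        - ‖(F xk + ξk) - (F xk + ζk)‖ ^ 2
    ∧ ‖F xk1 + ξk1‖ ≤ ‖F xk + ξk‖ := by
  have henergy := norm_sq_le_of_inner_le_inner <| extragradient_inner_le hη hx hy
    (hmono xk xk1) (h3 xk1 ξk1 xk ξk yk ζk hξk1 hξk hζk)
  have hgap := norm_sub_le_of_lipschitz_of_extragradient hη.le hL hx hy
  have hgap_sq : ‖(F xk1 + ξk1) - (F yk + ξk1)‖ ^ 2 ≤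
      (L * η) ^ 2 * ‖(F yk + ξk1) - (F xk + ζk)‖ ^ 2 := by
    rw [← mul_pow]; exact pow_le_pow_left₀ (norm_nonneg _) hgap 2
  have hgap_le : ‖(F xk1 + ξk1) - (F yk + ξk1)‖ ≤ ‖(F yk + ξk1) - (F xk + ζk)‖ :=
    hgap.trans (mul_le_of_le_one_left (norm_nonneg _) hLη)
  refine ⟨by linear_combination henergy + hgap_sq, ?_⟩
  refine (pow_le_pow_iff_left₀ (norm_nonneg _) (norm_nonneg _) two_ne_zero).mp ?_
  linarith [pow_le_pow_left₀ (norm_nonneg _) hgap_le 2,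
    sq_nonneg ‖(F xk + ξk) - (F xk + ζk)‖]
end

section
/- FBFS one-iteration estimate: let η > 0, β ∈ (0,1], γ > 0, and suppose y^k = x^k - (η/β)(u^k + ζ^k) and x^{k+1} = x^k + β(y^k - x^k) - η(F y^k - u^k) for some vectors u^k, ζ^k and map F. Then for any x⋆: ‖x^{k+1} - x⋆‖² ≤ ‖x^k - x⋆‖² - (1-β)‖x^{k+1} - x^k‖² - (β - γ)‖x^{k+1} - y^k‖² - β‖x^k - y^k‖² + (η²/γ)‖F y^k - u^k‖² - 2η⟨F y^k + ζ^k, y^k - x⋆⟩. -/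
/-!
Writing `a = x - y` and `b = (x - x') - β a`, the claimed bound differs from an exact identity
by the single nonnegative term `‖γ (1 - β) a + (1 - γ) b‖² / γ`. In the iteration,
`β a = η (u + ζ)` and `b = η (F y - u)`, so `x - x' = η (F y + ζ)`.
-/

open scoped RealInnerProductSpace

section

variable {E : Type*} [NormedAddCommGroup E] [InnerProductSpace ℝ E]

theorem norm_sub_sq_add_defect_eq {β γ : ℝ} (hγ : γ ≠ 0) (s a b : E) :
    ‖s - (β • a + b)‖ ^ 2 + ‖(γ * (1 - β)) • a + (1 - γ) • b‖ ^ 2 / γ =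
      ‖s‖ ^ 2 - (1 - β) * ‖β • a + b‖ ^ 2 - (β - γ) * ‖(1 - β) • a - b‖ ^ 2
        - β * ‖a‖ ^ 2 + ‖b‖ ^ 2 / γ - 2 * ⟪β • a + b, s - a⟫ := by
  simp only [← real_inner_self_eq_norm_sq, inner_sub_left, inner_sub_right, inner_add_left,
    inner_add_right, real_inner_smul_left, real_inner_smul_right, real_inner_comm s,
    real_inner_comm a b]
  field_simp
  ring

theorem norm_sub_sq_le_of_relaxed_step {β γ : ℝ} (hγ : 0 < γ) (x y x' z : E) :
    ‖x' - z‖ ^ 2 ≤ ‖x - z‖ ^ 2 - (1 - β) * ‖x' - x‖ ^ 2 - (β - γ) * ‖x' - y‖ ^ 2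
      - β * ‖x - y‖ ^ 2 + ‖(x - x') - β • (x - y)‖ ^ 2 / γ - 2 * ⟪x - x', y - z⟫ := by
  set a := x - y
  set b := (x - x') - β • a
  have hstep : x - x' = β • a + b := by simp only [b]; abel
  have key := norm_sub_sq_add_defect_eq (β := β) hγ.ne' (x - z) a b
  rw [← hstep] at key
  have h₁ : x' - z = (x - z) - (x - x') := by abel
  have h₂ : x' - x = -(x - x') := by abel
  have h₃ : x' - y = (1 - β) • a - b := by simp only [a, b]; module
  have h₄ : y - z = (x - z) - a := by simp only [a]; abel
  rw [h₁, h₂, norm_neg, h₃, h₄]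
  have hdefect : 0 ≤ ‖(γ * (1 - β)) • a + (1 - γ) • b‖ ^ 2 / γ := by positivity
  linarith

end

theorem fbfs_one_iteration_estimate_general {p : ℕ}
    (F : EuclideanSpace ℝ (Fin p) → EuclideanSpace ℝ (Fin p))
    (η β γ : ℝ) (hβ0 : 0 < β) (hγ : 0 < γ)
    (xk uk ζk yk xk1 : EuclideanSpace ℝ (Fin p))
    (hy : yk = xk - (η / β) • (uk + ζk))
    (hx : xk1 = xk + β • (yk - xk) - η • (F yk - uk))
    (xs : EuclideanSpace ℝ (Fin p)) :
    ‖xk1 - xs‖ ^ 2 ≤ ‖xk - xs‖ ^ 2 - (1 - β) * ‖xk1 - xk‖ ^ 2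
      - (β - γ) * ‖xk1 - yk‖ ^ 2 - β * ‖xk - yk‖ ^ 2
      + (η ^ 2 / γ) * ‖F yk - uk‖ ^ 2 - 2 * η * ⟪F yk + ζk, yk - xs⟫ := by
  have hres : (xk - xk1) - β • (xk - yk) = η • (F yk - uk) := by rw [hx]; module
  have hstep : xk - xk1 = η • (F yk + ζk) := by
    have hscaled : β • (xk - yk) = η • (uk + ζk) := by
      rw [hy, sub_sub_cancel, smul_smul, mul_div_cancel₀ η hβ0.ne']
    rw [← sub_add_cancel (xk - xk1) (β • (xk - yk)), hres, hscaled]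
    module
  have hbound := norm_sub_sq_le_of_relaxed_step (β := β) hγ xk yk xk1 xs
  rw [hres, hstep, norm_smul, mul_pow, Real.norm_eq_abs, sq_abs, real_inner_smul_left] at hbound
  exact hbound.trans_eq (by ring)

/-- One-iteration estimate for the forward-backward-forward splitting template. -/
theorem fbfs_one_iteration_estimate {p : ℕ}
    (F : EuclideanSpace ℝ (Fin p) → EuclideanSpace ℝ (Fin p))
    (η β γ : ℝ) (hη : 0 < η) (hβ0 : 0 < β) (hβ1 : β ≤ 1) (hγ : 0 < γ)
    (xk uk ζk yk xk1 : EuclideanSpace ℝ (Fin p))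
    (hy : yk = xk - (η / β) • (uk + ζk))
    (hx : xk1 = xk + β • (yk - xk) - η • (F yk - uk))
    (xs : EuclideanSpace ℝ (Fin p)) :
    ‖xk1 - xs‖ ^ 2 ≤ ‖xk - xs‖ ^ 2 - (1 - β) * ‖xk1 - xk‖ ^ 2
      - (β - γ) * ‖xk1 - yk‖ ^ 2 - β * ‖xk - yk‖ ^ 2
      + (η ^ 2 / γ) * ‖F yk - uk‖ ^ 2 - 2 * η * ⟪F yk + ζk, yk - xs⟫ :=
  fbfs_one_iteration_estimate_general F η β γ hβ0 hγ xk uk ζk yk xk1 hy hx xs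
end

section
/- RFBS residual decrease under monotonicity: let Φ = F + T with F + T monotone (as an operator) and F L-Lipschitz with √2·Lη < 1. Suppose w^k = F x^k + ξ^k, ŵ^k = F y^{k-1} + ξ^k with ξ^k ∈ T x^k, and the updates satisfy x^{k+1} - x^k = -η ŵ^{k+1} and x^{k+1} - y^k = -η(ŵ^{k+1} - ŵ^k). Then with κ := 2L²η²/(1 - 2L²η²): ‖w^{k+1}‖² + κ‖w^{k+1} - ŵ^{k+1}‖² ≤ ‖w^k‖² + κ‖w^k - ŵ^k‖² - ((1 - 4L²η²)/(1 - 2L²η²))‖ŵ^{k+1} - w^k‖². -/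
/-!
Write `a = w^{k+1}`, `b = ŵ^{k+1}`, `c = w^k`, `d = ŵ^k` and `s = L²η²`. Since `x^{k+1} - x^k = -η b`,
monotonicity of `F + T` says `⟪a - c, b⟫ ≤ 0`, which by the polarization identity gives
`‖a‖² ≤ ‖c‖² - ‖b - c‖² + ‖a - b‖²`. Since `x^{k+1} - y^k = -η (b - d)`, the Lipschitz bound gives
`‖a - b‖² ≤ s ‖b - d‖² ≤ 2s (‖b - c‖² + ‖c - d‖²)`. Adding `κ ‖a - b‖²`, `κ = 2s/(1 - 2s)`, to both sides of the first
estimate and using `(1 + κ) · 2s = κ` yields the claim.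
-/

open scoped RealInnerProductSpace

theorem nonneg_of_norm_sub_le_mul_norm_sub {α β : Type*} [NormedAddCommGroup α] [Nontrivial α]
    [SeminormedAddCommGroup β] {f : α → β} {L : ℝ} (hf : ∀ x y, ‖f x - f y‖ ≤ L * ‖x - y‖) :
    0 ≤ L := by
  obtain ⟨x, hx⟩ := exists_ne (0 : α)
  have h := (norm_nonneg _).trans (hf x 0)
  rw [sub_zero] at h
  exact nonneg_of_mul_nonneg_left h (norm_pos_iff.mpr hx)

section

variable {E : Type*} [NormedAddCommGroup E] [InnerProductSpace ℝ E]

theorem two_mul_inner_sub_eq_norm_sq (a b c : E) :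
    2 * ⟪a - c, b⟫ = ‖a‖ ^ 2 - ‖c‖ ^ 2 + ‖b - c‖ ^ 2 - ‖a - b‖ ^ 2 := by
  rw [norm_sub_sq_real, norm_sub_sq_real, inner_sub_left, real_inner_comm c b]
  ring

theorem norm_sq_le_of_inner_sub_nonpos {a b c : E} (h : ⟪a - c, b⟫ ≤ 0) :
    ‖a‖ ^ 2 ≤ ‖c‖ ^ 2 - ‖b - c‖ ^ 2 + ‖a - b‖ ^ 2 := by
  linarith [two_mul_inner_sub_eq_norm_sq a b c]

theorem norm_sq_add_le_of_inner_sub_nonpos {a b c d : E} {s : ℝ} (hs₀ : 0 ≤ s) (hs : 2 * s < 1)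
    (hmon : ⟪a - c, b⟫ ≤ 0) (hlip : ‖a - b‖ ^ 2 ≤ s * ‖b - d‖ ^ 2) :
    ‖a‖ ^ 2 + 2 * s / (1 - 2 * s) * ‖a - b‖ ^ 2
      ≤ ‖c‖ ^ 2 + 2 * s / (1 - 2 * s) * ‖c - d‖ ^ 2
        - (1 - 4 * s) / (1 - 2 * s) * ‖b - c‖ ^ 2 := by
  have hpos : 0 < 1 - 2 * s := by linarith
  set κ := 2 * s / (1 - 2 * s) with hκ_def
  have hκ₀ : 0 ≤ 1 + κ := by positivity
  have hκ : (1 + κ) * (2 * s) = κ := by rw [hκ_def]; field_simp; ring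
  have hκ' : (1 - 4 * s) / (1 - 2 * s) = 1 - κ := by rw [hκ_def, one_sub_div hpos.ne']; ring
  have hbd : ‖b - d‖ ^ 2 ≤ 2 * ‖b - c‖ ^ 2 + 2 * ‖c - d‖ ^ 2 := by
    calc ‖b - d‖ ^ 2 ≤ (‖b - c‖ + ‖c - d‖) ^ 2 := by
          gcongr; exact norm_sub_le_norm_sub_add_norm_sub b c d
      _ ≤ _ := by linarith [add_sq_le (a := ‖b - c‖) (b := ‖c - d‖)]
  calc ‖a‖ ^ 2 + κ * ‖a - b‖ ^ 2
      ≤ ‖c‖ ^ 2 - ‖b - c‖ ^ 2 + (1 + κ) * ‖a - b‖ ^ 2 := by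
        linarith [norm_sq_le_of_inner_sub_nonpos hmon]
    _ ≤ ‖c‖ ^ 2 - ‖b - c‖ ^ 2 + (1 + κ) * (s * (2 * ‖b - c‖ ^ 2 + 2 * ‖c - d‖ ^ 2)) := by
        gcongr
        exact hlip.trans (by gcongr)
    _ = ‖c‖ ^ 2 + κ * ‖c - d‖ ^ 2 - (1 - 4 * s) / (1 - 2 * s) * ‖b - c‖ ^ 2 := by
        rw [hκ']; linear_combination (‖b - c‖ ^ 2 + ‖c - d‖ ^ 2) * hκ

end

/-- RFBS residual decrease under monotonicity of `F + T`. -/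
theorem rfbs_residual_decrease {p : ℕ}
    (F : EuclideanSpace ℝ (Fin p) → EuclideanSpace ℝ (Fin p))
    (T : EuclideanSpace ℝ (Fin p) → Set (EuclideanSpace ℝ (Fin p)))
    (L η : ℝ) (hη : 0 < η)
    (hmono : ∀ x1 ξ1 x2 ξ2, ξ1 ∈ T x1 → ξ2 ∈ T x2 →
      0 ≤ ⟪(F x1 + ξ1) - (F x2 + ξ2), x1 - x2⟫)
    (hL : ∀ x y, ‖F x - F y‖ ≤ L * ‖x - y‖)
    (hLη : Real.sqrt 2 * L * η < 1)
    (xk xk1 yk ykm1 ξk ξk1 : EuclideanSpace ℝ (Fin p))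
    (hξk : ξk ∈ T xk) (hξk1 : ξk1 ∈ T xk1)
    (hx : xk1 - xk = -(η • (F yk + ξk1)))
    (hxy : xk1 - yk = -(η • ((F yk + ξk1) - (F ykm1 + ξk)))) :
    ‖F xk1 + ξk1‖ ^ 2
        + (2 * L ^ 2 * η ^ 2 / (1 - 2 * L ^ 2 * η ^ 2)) * ‖F xk1 - F yk‖ ^ 2
      ≤ ‖F xk + ξk‖ ^ 2
        + (2 * L ^ 2 * η ^ 2 / (1 - 2 * L ^ 2 * η ^ 2)) * ‖F xk - F ykm1‖ ^ 2
        - ((1 - 4 * L ^ 2 * η ^ 2) / (1 - 2 * L ^ 2 * η ^ 2))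
            * ‖(F yk + ξk1) - (F xk + ξk)‖ ^ 2 := by
  rcases subsingleton_or_nontrivial (EuclideanSpace ℝ (Fin p)) with hE | hE
  · simp [Subsingleton.elim _ (0 : EuclideanSpace ℝ (Fin p))]
  have hL₀ : 0 ≤ L := nonneg_of_norm_sub_le_mul_norm_sub hL
  have hs : 2 * (L ^ 2 * η ^ 2) < 1 := by
    have h : (Real.sqrt 2 * L * η) ^ 2 = 2 * (L ^ 2 * η ^ 2) := by
      rw [mul_pow, mul_pow, Real.sq_sqrt zero_le_two]; ring
    exact h ▸ pow_lt_one₀ (by positivity) hLη two_ne_zero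
  have hmon : ⟪(F xk1 + ξk1) - (F xk + ξk), F yk + ξk1⟫ ≤ 0 := by
    have h := hmono xk1 ξk1 xk ξk hξk1 hξk
    rw [hx, inner_neg_right, real_inner_smul_right, neg_nonneg] at h
    exact nonpos_of_mul_nonpos_right h hη
  have hlip : ‖(F xk1 + ξk1) - (F yk + ξk1)‖ ^ 2
      ≤ L ^ 2 * η ^ 2 * ‖(F yk + ξk1) - (F ykm1 + ξk)‖ ^ 2 := by
    have h := hL xk1 yk
    rw [hxy, norm_neg, norm_smul, Real.norm_of_nonneg hη.le,
      ← add_sub_add_right_eq_sub _ _ ξk1] at h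
    calc _ ≤ (L * (η * ‖(F yk + ξk1) - (F ykm1 + ξk)‖)) ^ 2 := by gcongr
      _ = _ := by ring
  have key := norm_sq_add_le_of_inner_sub_nonpos (by positivity) hs hmon hlip
  simpa only [add_sub_add_right_eq_sub, ← mul_assoc] using key
end

section
/- Golden-ratio one-iteration estimate: let T be 3-cyclically monotone, F L-Lipschitz, x⋆ ∈ zer(F + T), ω > 1, η > 0, γ > 0. Suppose the golden ratio iterates satisfy y^k = ((ω-1)/ω)x^k + (1/ω)y^{k-1}, x^{k+1} ∈ J_{ηT}(y^k - η F x^k) with ξ^{k+1} ∈ T x^{k+1} such that ηξ^{k+1} = y^k - x^{k+1} - ηF x^k. Then ω‖y^{k+1} - x⋆‖² + (ω-1)(ω-γ)‖x^{k+1} - x^k‖² ≤ ω‖y^k - x⋆‖² + ((ω-1)L²η²/γ)‖x^k - x^{k-1}‖² - ω(ω-1)‖x^k - y^k‖² - ((ω-1)(1-ω²+ω)/ω)‖x^{k+1} - y^k‖² - 2η(ω-1)⟨F x^k - F x⋆, x^k - x⋆⟩. -/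
/-!
Apply 3-cyclic monotonicity of `T` to `(x^{k+1}, ξ^{k+1})`, `(x⋆, ξ⋆)`, `(x^k, ξ^k)` and substitute
the resolvent equations, using `y^{k-1} - x^k = ω (y^k - x^k)`. This bounds
`η ⟪F x^k - F x⋆, x^k - x⋆⟫` by two inner products of iterates plus the cross term
`η ⟪F x^{k-1} - F x^k, x^{k+1} - x^k⟫`, which the Lipschitz bound and Young's inequality with
weight `γ` control. The three-point identity turns the inner products into squared norms, and
`ω ‖y^{k+1} - x⋆‖²` is expanded by the averaging identity for `y^{k+1}`; multiplying by
`2 (ω - 1)` and adding up gives the estimate.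
-/

open scoped RealInnerProductSpace

section

variable {E : Type*} [NormedAddCommGroup E] [InnerProductSpace ℝ E]

def ThreeCyclicallyMonotone (T : E → Set E) : Prop :=
  ∀ x1 u1 x2 u2 x3 u3, u1 ∈ T x1 → u2 ∈ T x2 → u3 ∈ T x3 →
    0 ≤ ⟪u1, x1 - x2⟫ + ⟪u2, x2 - x3⟫ + ⟪u3, x3 - x1⟫

theorem two_mul_inner_sub_sub (a b c : E) :
    2 * ⟪a - b, b - c⟫ = ‖a - c‖ ^ 2 - ‖a - b‖ ^ 2 - ‖b - c‖ ^ 2 := by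
  rw [show a - c = (a - b) + (b - c) by abel, norm_add_sq_real]
  ring

theorem mul_norm_golden_average_sq {ω : ℝ} (hω : ω ≠ 0) (a b : E) :
    ω * ‖((ω - 1) / ω) • a + (1 / ω) • b‖ ^ 2
      = (ω - 1) * ‖a‖ ^ 2 + ‖b‖ ^ 2 - ((ω - 1) / ω) * ‖a - b‖ ^ 2 := by
  rw [norm_add_sq_real, norm_sub_sq_real, norm_smul, norm_smul, real_inner_smul_left,
    real_inner_smul_right, mul_pow, mul_pow, Real.norm_eq_abs, Real.norm_eq_abs, sq_abs, sq_abs]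
  field_simp
  ring

theorem two_mul_le_div_add_mul {a b γ : ℝ} (hγ : 0 < γ) : 2 * a * b ≤ a ^ 2 / γ + γ * b ^ 2 := by
  have hsq : a ^ 2 / γ + γ * b ^ 2 - 2 * a * b = (a - γ * b) ^ 2 / γ := by
    field_simp
    ring
  nlinarith [div_nonneg (sq_nonneg (a - γ * b)) hγ.le]

theorem two_mul_inner_sub_le_of_lipschitz {F : E → E} {L η γ : ℝ}
    (hL : ∀ x y, ‖F x - F y‖ ≤ L * ‖x - y‖) (hη : 0 ≤ η) (hγ : 0 < γ) (a b v : E) :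
    2 * η * ⟪F a - F b, v⟫ ≤ L ^ 2 * η ^ 2 / γ * ‖a - b‖ ^ 2 + γ * ‖v‖ ^ 2 := by
  have hcs : ⟪F a - F b, v⟫ ≤ L * ‖a - b‖ * ‖v‖ :=
    (real_inner_le_norm _ _).trans (mul_le_mul_of_nonneg_right (hL a b) (norm_nonneg v))
  calc 2 * η * ⟪F a - F b, v⟫ ≤ 2 * (η * L * ‖a - b‖) * ‖v‖ := by nlinarith
    _ ≤ (η * L * ‖a - b‖) ^ 2 / γ + γ * ‖v‖ ^ 2 := two_mul_le_div_add_mul hγ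
    _ = L ^ 2 * η ^ 2 / γ * ‖a - b‖ ^ 2 + γ * ‖v‖ ^ 2 := by ring

theorem ThreeCyclicallyMonotone.golden_ratio_step_le {T : E → Set E}
    (hT : ThreeCyclicallyMonotone T) {F : E → E} {η ω : ℝ} (hη : 0 ≤ η)
    {xs ξs xkm1 xk xk1 yk ξk ξk1 : E}
    (hξs : ξs ∈ T xs) (hzero : F xs + ξs = 0) (hξk : ξk ∈ T xk) (hξk1 : ξk1 ∈ T xk1)
    (hresk : η • ξk = ω • (yk - xk) - η • F xkm1)
    (hresk1 : η • ξk1 = yk - xk1 - η • F xk) :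
    η * ⟪F xk - F xs, xk - xs⟫
      ≤ ⟪yk - xk1, xk1 - xs⟫ + ω * ⟪yk - xk, xk - xk1⟫ + η * ⟪F xkm1 - F xk, xk1 - xk⟫ := by
  have hmono := mul_nonneg hη (hT xk1 ξk1 xs ξs xk ξk hξk1 hξs hξk)
  have hξs' : η • ξs = -(η • F xs) := by rw [eq_neg_of_add_eq_zero_right hzero, smul_neg]
  rw [mul_add, mul_add, ← real_inner_smul_left, ← real_inner_smul_left,
    ← real_inner_smul_left, hresk, hresk1, hξs'] at hmono
  simp only [inner_sub_left, inner_sub_right, inner_neg_left, real_inner_smul_left] at hmono ⊢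
  linarith

end

/-- Golden-ratio method one-iteration estimate. -/
theorem golden_ratio_one_iteration_estimate {p : ℕ}
    (F : EuclideanSpace ℝ (Fin p) → EuclideanSpace ℝ (Fin p))
    (T : EuclideanSpace ℝ (Fin p) → Set (EuclideanSpace ℝ (Fin p)))
    (L η γ ω : ℝ) (hη : 0 < η) (hγ : 0 < γ) (hω : 1 < ω)
    (h3 : ∀ x1 u1 x2 u2 x3 u3, u1 ∈ T x1 → u2 ∈ T x2 → u3 ∈ T x3 →
      0 ≤ ⟪u1, x1 - x2⟫ + ⟪u2, x2 - x3⟫ + ⟪u3, x3 - x1⟫)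
    (hL : ∀ x y, ‖F x - F y‖ ≤ L * ‖x - y‖)
    (xs ξs : EuclideanSpace ℝ (Fin p)) (hξs : ξs ∈ T xs) (hzero : F xs + ξs = 0)
    (xkm1 xk xk1 ykm1 yk yk1 ξk ξk1 : EuclideanSpace ℝ (Fin p))
    (hξk : ξk ∈ T xk) (hξk1 : ξk1 ∈ T xk1)
    (hyk : yk = ((ω - 1) / ω) • xk + (1 / ω) • ykm1)
    (hyk1 : yk1 = ((ω - 1) / ω) • xk1 + (1 / ω) • yk)
    (hresk : η • ξk = ykm1 - xk - η • F xkm1)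
    (hresk1 : η • ξk1 = yk - xk1 - η • F xk) :
    ω * ‖yk1 - xs‖ ^ 2 + (ω - 1) * (ω - γ) * ‖xk1 - xk‖ ^ 2
      ≤ ω * ‖yk - xs‖ ^ 2 + ((ω - 1) * L ^ 2 * η ^ 2 / γ) * ‖xk - xkm1‖ ^ 2
        - ω * (ω - 1) * ‖xk - yk‖ ^ 2
        - ((ω - 1) * (1 - ω ^ 2 + ω) / ω) * ‖xk1 - yk‖ ^ 2
        - 2 * η * (ω - 1) * ⟪F xk - F xs, xk - xs⟫ := by
  have hω0 : ω ≠ 0 := (zero_lt_one.trans hω).ne'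
  have hykm1 : ykm1 - xk = ω • (yk - xk) := by
    rw [hyk]; match_scalars <;> field_simp; ring
  have hyk1' : yk1 - xs = ((ω - 1) / ω) • (xk1 - xs) + (1 / ω) • (yk - xs) := by
    rw [hyk1]; match_scalars <;> field_simp; ring
  have hstep := ThreeCyclicallyMonotone.golden_ratio_step_le h3 hη.le hξs hzero hξk hξk1
    (hykm1 ▸ hresk) hresk1
  have hyoung := two_mul_inner_sub_le_of_lipschitz hL hη.le hγ xkm1 xk (xk1 - xk)
  have havg := mul_norm_golden_average_sq hω0 (xk1 - xs) (yk - xs)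
  rw [← hyk1', sub_sub_sub_cancel_right] at havg
  have h1 := two_mul_inner_sub_sub yk xk1 xs
  have h2 := two_mul_inner_sub_sub yk xk xk1
  rw [norm_sub_rev xkm1 xk] at hyoung
  rw [norm_sub_rev yk xk1] at h1 h2
  rw [norm_sub_rev yk xk, norm_sub_rev xk xk1] at h2
  have hcoef : (ω - 1) * (1 - ω ^ 2 + ω) / ω = (ω - 1) / ω - (ω - 1) ^ 2 := by
    field_simp
    ring
  rw [hcoef]
  linear_combination 2 * (ω - 1) * hstep + (ω - 1) * hyoung + havg + (ω - 1) * h1 + ω * (ω - 1) * h2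
end

section
/- Potential decrease for the extra-anchored gradient (EAG) method on monotone inclusions: let F be monotone and L-Lipschitz, T 3-cyclically monotone, and consider iterates satisfying y^k = τ_k x⁰ + (1-τ_k)x^k - η(1-τ_k) w̃^k and x^{k+1} = τ_k x⁰ + (1-τ_k)x^k - η ŵ^{k+1}, where w̃^k = F x^k + ζ^k (ζ^k ∈ T y^k), ŵ^{k+1} = F y^k + ξ^{k+1}, w^k = F x^k + ξ^k (ξ^i ∈ T x^i), τ_k = 1/(k+2), 0 < η ≤ 1/L. Define V_k := (η b_0 (k+1)²/2)‖w^k‖² + b_0(k+1)⟨w^k, x^k - x⁰⟩ for fixed b_0 > 0. Then V_{k+1} ≤ V_k for all k ≥ 0. -/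
/-!
Up to the factor `b₀`, the potential drop `V_k - V_{k+1}` is, by pure algebra from the two update
rules, a nonnegative combination of four quantities: the 3-cyclic monotonicity sum of `T` along
`x^k → y^k → x^{k+1}`, the monotonicity gap `⟪F x^{k+1} - F x^k, x^{k+1} - x^k⟫`,
`‖x^{k+1} - y^k‖² - η²‖F x^{k+1} - F y^k‖²` (nonnegative since `ηL ≤ 1`), and `‖ζ^k - ξ^k‖²`.
-/

open scoped RealInnerProductSpace

theorem sq_mul_norm_sub_le_sq_norm_sub {E E' : Type*} [SeminormedAddCommGroup E]
    [SeminormedAddCommGroup E'] {F : E → E'} {L η : ℝ} (hη : 0 < η) (hηL : η ≤ 1 / L)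
    (hF : ∀ u v, ‖F u - F v‖ ≤ L * ‖u - v‖) (u v : E) :
    η ^ 2 * ‖F u - F v‖ ^ 2 ≤ ‖u - v‖ ^ 2 := by
  have hL : 0 < L := one_div_pos.mp (hη.trans_le hηL)
  have hηL' : η * L ≤ 1 := by rwa [le_div_iff₀ hL] at hηL
  have hstep : η * ‖F u - F v‖ ≤ ‖u - v‖ :=
    calc η * ‖F u - F v‖ ≤ η * (L * ‖u - v‖) := mul_le_mul_of_nonneg_left (hF u v) hη.le
      _ = (η * L) * ‖u - v‖ := by ring
      _ ≤ ‖u - v‖ := mul_le_of_le_one_left (norm_nonneg _) hηL'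
  rw [← mul_pow]
  exact pow_le_pow_left₀ (by positivity) hstep 2

section

variable {E : Type*} [NormedAddCommGroup E] [InnerProductSpace ℝ E]

/-- The paper's `V_k / b₀` is `eagPotential η (k + 1) x⁰ xᵏ wᵏ`. -/
noncomputable def eagPotential (η t : ℝ) (x₀ x w : E) : ℝ :=
  η * t ^ 2 / 2 * ‖w‖ ^ 2 + t * ⟪w, x - x₀⟫

theorem eagPotential_sub_eagPotential_succ {η t : ℝ} (hη : η ≠ 0) (ht : t + 1 ≠ 0)
    {x₀ x y x' a b c ξ ζ ξ' : E}
    (hy : y = (1 / (t + 1)) • x₀ + (1 - 1 / (t + 1)) • x - (η * (1 - 1 / (t + 1))) • (a + ζ))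
    (hx' : x' = (1 / (t + 1)) • x₀ + (1 - 1 / (t + 1)) • x - η • (b + ξ')) :
    eagPotential η t x₀ x (a + ξ) - eagPotential η (t + 1) x₀ x' (c + ξ')
      = t * (t + 1) * (⟪ξ, x - y⟫ + ⟪ζ, y - x'⟫ + ⟪ξ', x' - x⟫)
        + t * (t + 1) * ⟪c - a, x' - x⟫
        + (t + 1) ^ 2 / (2 * η) * (‖x' - y‖ ^ 2 - η ^ 2 * ‖c - b‖ ^ 2)
        + η * t ^ 2 / 2 * ‖ζ - ξ‖ ^ 2 := by
  subst hy hx'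
  simp only [eagPotential, ← real_inner_self_eq_norm_sq, inner_add_left, inner_add_right,
    inner_sub_left, inner_sub_right, real_inner_smul_left, real_inner_smul_right]
  simp only [real_inner_comm]
  field_simp
  ring

theorem eagPotential_succ_le {F : E → E} {η t : ℝ} (hη : 0 < η) (ht : 0 ≤ t)
    {x₀ x y x' ξ ζ ξ' : E}
    (hmono : 0 ≤ ⟪F x' - F x, x' - x⟫)
    (hLip : η ^ 2 * ‖F x' - F y‖ ^ 2 ≤ ‖x' - y‖ ^ 2)
    (hcyc : 0 ≤ ⟪ξ, x - y⟫ + ⟪ζ, y - x'⟫ + ⟪ξ', x' - x⟫)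
    (hy : y = (1 / (t + 1)) • x₀ + (1 - 1 / (t + 1)) • x - (η * (1 - 1 / (t + 1))) • (F x + ζ))
    (hx' : x' = (1 / (t + 1)) • x₀ + (1 - 1 / (t + 1)) • x - η • (F y + ξ')) :
    eagPotential η (t + 1) x₀ x' (F x' + ξ') ≤ eagPotential η t x₀ x (F x + ξ) := by
  have hdiff := eagPotential_sub_eagPotential_succ (c := F x') (ξ := ξ) hη.ne'
    (by positivity) hy hx'
  have hcoef : 0 ≤ t * (t + 1) := by positivity
  have := mul_nonneg hcoef hcyc
  have := mul_nonneg hcoef hmono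
  have := mul_nonneg (by positivity : 0 ≤ (t + 1) ^ 2 / (2 * η)) (sub_nonneg.mpr hLip)
  have := mul_nonneg (by positivity : 0 ≤ η * t ^ 2 / 2) (sq_nonneg ‖ζ - ξ‖)
  linarith

end

theorem eag_potential_decrease_general {p : ℕ}
    (F : EuclideanSpace ℝ (Fin p) → EuclideanSpace ℝ (Fin p))
    (T : EuclideanSpace ℝ (Fin p) → Set (EuclideanSpace ℝ (Fin p)))
    (L η b0 : ℝ) (hη0 : 0 < η) (hη1 : η ≤ 1 / L) (hb0 : 0 < b0)
    (hmono : ∀ x y, 0 ≤ ⟪F x - F y, x - y⟫)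
    (hLip : ∀ x y, ‖F x - F y‖ ≤ L * ‖x - y‖)
    (h3 : ∀ x1 u1 x2 u2 x3 u3, u1 ∈ T x1 → u2 ∈ T x2 → u3 ∈ T x3 →
      0 ≤ ⟪u1, x1 - x2⟫ + ⟪u2, x2 - x3⟫ + ⟪u3, x3 - x1⟫)
    (x y ξ ζ : ℕ → EuclideanSpace ℝ (Fin p))
    (hξ : ∀ k, ξ k ∈ T (x k)) (hζ : ∀ k, ζ k ∈ T (y k))
    (hy : ∀ k : ℕ, y k = (1 / ((k : ℝ) + 2)) • x 0 + (1 - 1 / ((k : ℝ) + 2)) • x k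
        - (η * (1 - 1 / ((k : ℝ) + 2))) • (F (x k) + ζ k))
    (hx : ∀ k : ℕ, x (k + 1) = (1 / ((k : ℝ) + 2)) • x 0 + (1 - 1 / ((k : ℝ) + 2)) • x k
        - η • (F (y k) + ξ (k + 1))) :
    ∀ k : ℕ,
      η * b0 * ((k : ℝ) + 2) ^ 2 / 2 * ‖F (x (k + 1)) + ξ (k + 1)‖ ^ 2
          + b0 * ((k : ℝ) + 2) * ⟪F (x (k + 1)) + ξ (k + 1), x (k + 1) - x 0⟫
        ≤ η * b0 * ((k : ℝ) + 1) ^ 2 / 2 * ‖F (x k) + ξ k‖ ^ 2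
          + b0 * ((k : ℝ) + 1) * ⟪F (x k) + ξ k, x k - x 0⟫ := by
  intro k
  have hk : (k : ℝ) + 2 = (k : ℝ) + 1 + 1 := by ring
  have hstep := eagPotential_succ_le (t := (k : ℝ) + 1) hη0 (by positivity)
    (hmono _ _) (sq_mul_norm_sub_le_sq_norm_sub hη0 hη1 hLip _ _)
    (h3 _ _ _ _ _ _ (hξ k) (hζ k) (hξ (k + 1))) (by rw [hy k, hk]) (by rw [hx k, hk])
  calc _ = b0 * eagPotential η ((k : ℝ) + 1 + 1) (x 0) (x (k + 1)) (F (x (k + 1)) + ξ (k + 1)) := by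
          unfold eagPotential; ring
    _ ≤ b0 * eagPotential η ((k : ℝ) + 1) (x 0) (x k) (F (x k) + ξ k) :=
          mul_le_mul_of_nonneg_left hstep hb0.le
    _ = _ := by unfold eagPotential; ring

/-- Potential decrease for the extra-anchored gradient (EAG) method on monotone inclusions. -/
theorem eag_potential_decrease {p : ℕ}
    (F : EuclideanSpace ℝ (Fin p) → EuclideanSpace ℝ (Fin p))
    (T : EuclideanSpace ℝ (Fin p) → Set (EuclideanSpace ℝ (Fin p)))
    (L η b0 : ℝ) (hL : 0 < L) (hη0 : 0 < η) (hη1 : η ≤ 1 / L) (hb0 : 0 < b0)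
    (hmono : ∀ x y, 0 ≤ ⟪F x - F y, x - y⟫)
    (hLip : ∀ x y, ‖F x - F y‖ ≤ L * ‖x - y‖)
    (h3 : ∀ x1 u1 x2 u2 x3 u3, u1 ∈ T x1 → u2 ∈ T x2 → u3 ∈ T x3 →
      0 ≤ ⟪u1, x1 - x2⟫ + ⟪u2, x2 - x3⟫ + ⟪u3, x3 - x1⟫)
    (x y ξ ζ : ℕ → EuclideanSpace ℝ (Fin p))
    (hξ : ∀ k, ξ k ∈ T (x k)) (hζ : ∀ k, ζ k ∈ T (y k))
    (hy : ∀ k : ℕ, y k = (1 / ((k : ℝ) + 2)) • x 0 + (1 - 1 / ((k : ℝ) + 2)) • x k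
        - (η * (1 - 1 / ((k : ℝ) + 2))) • (F (x k) + ζ k))
    (hx : ∀ k : ℕ, x (k + 1) = (1 / ((k : ℝ) + 2)) • x 0 + (1 - 1 / ((k : ℝ) + 2)) • x k
        - η • (F (y k) + ξ (k + 1))) :
    ∀ k : ℕ,
      η * b0 * ((k : ℝ) + 2) ^ 2 / 2 * ‖F (x (k + 1)) + ξ (k + 1)‖ ^ 2
          + b0 * ((k : ℝ) + 2) * ⟪F (x (k + 1)) + ξ (k + 1), x (k + 1) - x 0⟫
        ≤ η * b0 * ((k : ℝ) + 1) ^ 2 / 2 * ‖F (x k) + ξ k‖ ^ 2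
          + b0 * ((k : ℝ) + 1) * ⟪F (x k) + ξ k, x k - x 0⟫ :=
  eag_potential_decrease_general F T L η b0 hη0 hη1 hb0 hmono hLip h3 x y ξ ζ hξ hζ hy hx
end

section
/- Lower bound on the anchored potential under co-hypomonotonicity: let Φ be ρ-co-hypomonotone with x⋆ ∈ zer Φ, w^k ∈ Φ x^k, and let a_k = b_0((η-2ρ)(k+1) + 2ρ)(k+1)/2, b_k = b_0(k+1) for b_0 > 0 and η > 2ρ. Then a_k‖w^k‖² + b_k⟨w^k, x^k - x⁰⟩ ≥ (b_0(η-2ρ)(k+1)²/4)‖w^k‖² - (b_0/(η-2ρ))‖x⁰ - x⋆‖². -/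
open scoped RealInnerProductSpace

theorem mul_le_div_four_mul_sq_add_sq_div {c : ℝ} (hc : 0 < c) (a b : ℝ) :
    a * b ≤ c / 4 * a ^ 2 + b ^ 2 / c := by
  have hsq : 0 ≤ (c * a - 2 * b) ^ 2 / (4 * c) := by positivity
  calc a * b = c / 4 * a ^ 2 + b ^ 2 / c - (c * a - 2 * b) ^ 2 / (4 * c) := by
        field_simp; ring
    _ ≤ c / 4 * a ^ 2 + b ^ 2 / c := sub_le_self _ hsq

theorem neg_mul_norm_sq_sub_mul_le_inner_sub {E : Type*} [NormedAddCommGroup E]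
    [InnerProductSpace ℝ E] {ρ : ℝ} {w x xs : E} (hx : -ρ * ‖w‖ ^ 2 ≤ ⟪w, x - xs⟫) (x0 : E) :
    -ρ * ‖w‖ ^ 2 - ‖w‖ * ‖x0 - xs‖ ≤ ⟪w, x - x0⟫ := by
  have hsplit : ⟪w, x - x0⟫ = ⟪w, x - xs⟫ - ⟪w, x0 - xs⟫ := by
    rw [← inner_sub_right, sub_sub_sub_cancel_right]
  rw [hsplit]
  exact sub_le_sub hx (real_inner_le_norm w (x0 - xs))

theorem anchored_potential_lower_bound_general {p : ℕ}
    (Φ : EuclideanSpace ℝ (Fin p) → Set (EuclideanSpace ℝ (Fin p)))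
    (ρ η b0 : ℝ) (hb0 : 0 < b0) (hη : 2 * ρ < η)
    (hco : ∀ x u y v, u ∈ Φ x → v ∈ Φ y → -ρ * ‖u - v‖ ^ 2 ≤ ⟪u - v, x - y⟫)
    (xs : EuclideanSpace ℝ (Fin p)) (hxs : (0 : EuclideanSpace ℝ (Fin p)) ∈ Φ xs)
    (k : ℕ) (x0 xk wk : EuclideanSpace ℝ (Fin p)) (hw : wk ∈ Φ xk) :
    b0 * (η - 2 * ρ) * ((k : ℝ) + 1) ^ 2 / 4 * ‖wk‖ ^ 2
        - b0 / (η - 2 * ρ) * ‖x0 - xs‖ ^ 2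
      ≤ b0 * ((η - 2 * ρ) * ((k : ℝ) + 1) + 2 * ρ) * ((k : ℝ) + 1) / 2 * ‖wk‖ ^ 2
        + b0 * ((k : ℝ) + 1) * ⟪wk, xk - x0⟫ := by
  have hc : 0 < η - 2 * ρ := sub_pos.mpr hη
  have hbk : 0 ≤ b0 * ((k : ℝ) + 1) := by positivity
  have hzero : -ρ * ‖wk‖ ^ 2 ≤ ⟪wk, xk - xs⟫ := by simpa using hco xk wk xs 0 hw hxs
  have hanchor := neg_mul_norm_sq_sub_mul_le_inner_sub hzero x0
  have hyoung := mul_le_div_four_mul_sq_add_sq_div hc (((k : ℝ) + 1) * ‖wk‖) ‖x0 - xs‖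
  -- the `ρ`-terms of `a_k` cancel against the co-hypomonotonicity term exactly
  linear_combination mul_le_mul_of_nonneg_left hanchor hbk + mul_le_mul_of_nonneg_left hyoung hb0.le

/-- Lower bound on the anchored potential under co-hypomonotonicity. -/
theorem anchored_potential_lower_bound {p : ℕ}
    (Φ : EuclideanSpace ℝ (Fin p) → Set (EuclideanSpace ℝ (Fin p)))
    (ρ η b0 : ℝ) (hρ : 0 ≤ ρ) (hb0 : 0 < b0) (hη : 2 * ρ < η)
    (hco : ∀ x u y v, u ∈ Φ x → v ∈ Φ y → -ρ * ‖u - v‖ ^ 2 ≤ ⟪u - v, x - y⟫)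
    (xs : EuclideanSpace ℝ (Fin p)) (hxs : (0 : EuclideanSpace ℝ (Fin p)) ∈ Φ xs)
    (k : ℕ) (x0 xk wk : EuclideanSpace ℝ (Fin p)) (hw : wk ∈ Φ xk) :
    b0 * (η - 2 * ρ) * ((k : ℝ) + 1) ^ 2 / 4 * ‖wk‖ ^ 2
        - b0 / (η - 2 * ρ) * ‖x0 - xs‖ ^ 2
      ≤ b0 * ((η - 2 * ρ) * ((k : ℝ) + 1) + 2 * ρ) * ((k : ℝ) + 1) / 2 * ‖wk‖ ^ 2
        + b0 * ((k : ℝ) + 1) * ⟪wk, xk - x0⟫ :=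
  anchored_potential_lower_bound_general Φ ρ η b0 hb0 hη hco xs hxs k x0 xk wk hw
end

section
/- O(1/k) rate of the fast extragradient (FEG) for co-hypomonotone inclusions: assume Φ = F + T is ρ-co-hypomonotone, F is L-Lipschitz with 2Lρ < 1, x⋆ ∈ zer Φ. Consider iterates with w^k = F x^k + ξ^k (ξ^k ∈ T x^k), ŵ^{k+1} = F y^k + ξ^{k+1}, satisfying y^k = x^k + τ_k(x⁰ - x^k) - (η̂_k - β_k)w^k and x^{k+1} = x^k + τ_k(x⁰ - x^k) - η ŵ^{k+1} + β_k w^k, where τ_k = 1/(k+2), β_k = 2ρ(1-τ_k), η ∈ (2ρ, 1/L], η̂_k = (1-τ_k)η. Then for all k ≥ 0: ‖F x^k + ξ^k‖² ≤ (4‖x⁰ - x⋆‖² + 2η(η - 2ρ)‖F x⁰ + ξ⁰‖²)/((η - 2ρ)²(k+1)²). -/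
/-!
With `w k = F (x k) + ξ k`, the potential
`V k = ((η - 2ρ)(k + 1) + 2ρ)(k + 1)/2 ‖w k‖² + (k + 1) ⟪w k, x k - x 0⟫` is nonincreasing:
`V k - V (k + 1)` is a nonnegative combination of the co-hypomonotonicity inequality between
`x (k + 1)` and `x k` and of the Lipschitz inequality between `x (k + 1)` and `y k`.
Co-hypomonotonicity between `x k` and the zero `xs`, together with Cauchy–Schwarz, bounds `V k`
from below by a quadratic in `(k + 1) ‖w k‖`, while `V 0 = η/2 ‖w 0‖²`; solving the quadratic
inequality gives the rate.
-/

open scoped RealInnerProductSpace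

section
variable {E : Type*} [NormedAddCommGroup E] [InnerProductSpace ℝ E]

noncomputable def fegPotential (η ρ n : ℝ) (w d : E) : ℝ :=
  ((η - 2 * ρ) * n + 2 * ρ) * n / 2 * ‖w‖ ^ 2 + n * ⟪w, d⟫

theorem fegPotential_step_le {η ρ c : ℝ} (hη : 0 < η) (hc : 1 ≤ c) {x₀ x x' y w w' v : E}
    (hy : y = x + (1 / c) • (x₀ - x) - ((1 - 1 / c) * η - 2 * ρ * (1 - 1 / c)) • w)
    (hx' : x' = x + (1 / c) • (x₀ - x) - η • v + (2 * ρ * (1 - 1 / c)) • w)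
    (hco : -ρ * ‖w' - w‖ ^ 2 ≤ ⟪w' - w, x' - x⟫)
    (hlip : η * ‖w' - v‖ ≤ ‖x' - y‖) :
    fegPotential η ρ c w' (x' - x₀) ≤ fegPotential η ρ (c - 1) w (x - x₀) := by
  set d := x - x₀
  have hdiff : x' - x = (-(1 / c)) • d - η • v + (2 * ρ * (1 - 1 / c)) • w := by
    rw [hx']; module
  have hnext : x' - x₀ = (1 - 1 / c) • d - η • v + (2 * ρ * (1 - 1 / c)) • w := by
    rw [hx']; module
  have hgap : x' - y = ((1 - 1 / c) * η) • w - η • v := by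
    rw [hx', hy]; module
  have hlip2 : η ^ 2 * ‖w' - v‖ ^ 2 ≤ ‖x' - y‖ ^ 2 := by
    rw [← mul_pow]; exact pow_le_pow_left₀ (by positivity) hlip 2
  rw [hdiff, norm_sub_sq_real] at hco
  rw [hgap, norm_sub_sq_real, norm_sub_sq_real] at hlip2
  simp only [inner_sub_left, inner_sub_right, inner_add_right, real_inner_smul_left,
    real_inner_smul_right, real_inner_self_eq_norm_sq, norm_smul, mul_pow, Real.norm_eq_abs,
    sq_abs] at hco hlip2
  simp only [fegPotential, hnext, inner_sub_right, inner_add_right, real_inner_smul_right]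
  -- The drop of the potential is `(c - 1) c` times the co-hypomonotonicity slack plus `c² / (2η)`
  -- times the Lipschitz slack.
  have h1 := mul_le_mul_of_nonneg_left hco (by nlinarith : 0 ≤ (c - 1) * c)
  have h2 := mul_le_mul_of_nonneg_left hlip2 (by positivity : 0 ≤ c ^ 2 / (2 * η))
  linear_combination (norm := skip) h1 + h2
  apply le_of_eq
  field_simp
  ring

theorem fegPotential_ge {η ρ n : ℝ} (hn : 0 ≤ n) {w x x₀ xs : E}
    (hco : -ρ * ‖w‖ ^ 2 ≤ ⟪w, x - xs⟫) :
    (η - 2 * ρ) * n ^ 2 / 2 * ‖w‖ ^ 2 - n * ‖w‖ * ‖x₀ - xs‖ ≤ fegPotential η ρ n w (x - x₀) := by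
  have hsplit : ⟪w, x - x₀⟫ = ⟪w, x - xs⟫ - ⟪w, x₀ - xs⟫ := by
    rw [← inner_sub_right, sub_sub_sub_cancel_right]
  have hcs : ⟪w, x₀ - xs⟫ ≤ ‖w‖ * ‖x₀ - xs‖ := real_inner_le_norm _ _
  have hinner : -ρ * ‖w‖ ^ 2 - ‖w‖ * ‖x₀ - xs‖ ≤ ⟪w, x - x₀⟫ := by linarith
  have h := mul_le_mul_of_nonneg_left hinner hn
  unfold fegPotential
  linarith

end

theorem sq_le_of_quadratic_le {a n s r B : ℝ} (ha : 0 < a) (hn : 0 < n)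
    (h : a * n ^ 2 / 2 * s ^ 2 - n * s * r ≤ B) :
    s ^ 2 ≤ (4 * r ^ 2 + 4 * a * B) / (a ^ 2 * n ^ 2) := by
  rw [le_div_iff₀ (by positivity)]
  nlinarith [sq_nonneg (a * n * s - 2 * r)]

theorem feg_last_iterate_rate_general {p : ℕ}
    (F : EuclideanSpace ℝ (Fin p) → EuclideanSpace ℝ (Fin p))
    (T : EuclideanSpace ℝ (Fin p) → Set (EuclideanSpace ℝ (Fin p)))
    (L ρ η : ℝ) (hρ : 0 ≤ ρ)
    (hLip : ∀ x y, ‖F x - F y‖ ≤ L * ‖x - y‖)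
    (hco : ∀ x1 ξ1 x2 ξ2, ξ1 ∈ T x1 → ξ2 ∈ T x2 →
      -ρ * ‖(F x1 + ξ1) - (F x2 + ξ2)‖ ^ 2 ≤ ⟪(F x1 + ξ1) - (F x2 + ξ2), x1 - x2⟫)
    (xs ξs : EuclideanSpace ℝ (Fin p)) (hξs : ξs ∈ T xs) (hzero : F xs + ξs = 0)
    (hη0 : 2 * ρ < η) (hη1 : η ≤ 1 / L)
    (x y ξ : ℕ → EuclideanSpace ℝ (Fin p))
    (hξ : ∀ k, ξ k ∈ T (x k))
    (hy : ∀ k : ℕ, y k = x k + (1 / ((k : ℝ) + 2)) • (x 0 - x k)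
        - ((1 - 1 / ((k : ℝ) + 2)) * η - 2 * ρ * (1 - 1 / ((k : ℝ) + 2)))
            • (F (x k) + ξ k))
    (hx : ∀ k : ℕ, x (k + 1) = x k + (1 / ((k : ℝ) + 2)) • (x 0 - x k)
        - η • (F (y k) + ξ (k + 1))
        + (2 * ρ * (1 - 1 / ((k : ℝ) + 2))) • (F (x k) + ξ k)) :
    ∀ k : ℕ, ‖F (x k) + ξ k‖ ^ 2
      ≤ (4 * ‖x 0 - xs‖ ^ 2 + 2 * η * (η - 2 * ρ) * ‖F (x 0) + ξ 0‖ ^ 2)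
          / ((η - 2 * ρ) ^ 2 * ((k : ℝ) + 1) ^ 2) := by
  intro k
  have hη : 0 < η := by linarith
  have hL : 0 < L := one_div_pos.mp (hη.trans_le hη1)
  have hlip (a b) : η * ‖F a - F b‖ ≤ ‖a - b‖ :=
    calc η * ‖F a - F b‖ ≤ η * (L * ‖a - b‖) := mul_le_mul_of_nonneg_left (hLip a b) hη.le
      _ = (η * L) * ‖a - b‖ := by ring
      _ ≤ ‖a - b‖ := mul_le_of_le_one_left (norm_nonneg _) ((le_div_iff₀ hL).mp hη1)
  let V (k : ℕ) : ℝ := fegPotential η ρ ((k : ℝ) + 1) (F (x k) + ξ k) (x k - x 0)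
  have hV : Antitone V := antitone_nat_of_succ_le fun k => by
    have h := fegPotential_step_le hη (by linarith [(k.cast_nonneg : (0 : ℝ) ≤ k)]) (hy k) (hx k)
      (hco _ _ _ _ (hξ (k + 1)) (hξ k))
      (by simpa only [add_sub_add_right_eq_sub] using hlip (x (k + 1)) (y k))
    have hk : ((k + 1 : ℕ) : ℝ) + 1 = k + 2 := by push_cast; ring
    have hk' : (k : ℝ) + 2 - 1 = k + 1 := by ring
    simpa only [V, hk, hk'] using h
  have hV0 : V 0 = η / 2 * ‖F (x 0) + ξ 0‖ ^ 2 := by simp [V, fegPotential]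
  have hco_zero := hco (x k) (ξ k) xs ξs (hξ k) hξs
  rw [hzero, sub_zero] at hco_zero
  have hlow := fegPotential_ge (η := η) (x₀ := x 0) (by positivity : (0 : ℝ) ≤ k + 1) hco_zero
  calc ‖F (x k) + ξ k‖ ^ 2
      ≤ (4 * ‖x 0 - xs‖ ^ 2 + 4 * (η - 2 * ρ) * (η / 2 * ‖F (x 0) + ξ 0‖ ^ 2))
          / ((η - 2 * ρ) ^ 2 * ((k : ℝ) + 1) ^ 2) :=
        sq_le_of_quadratic_le (by linarith) (by positivity)
          (hlow.trans ((hV k.zero_le).trans_eq hV0))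
    _ = _ := by ring

/-- `O(1/k)` last-iterate rate of the fast extragradient (FEG) method for
co-hypomonotone inclusions. -/
theorem feg_last_iterate_rate {p : ℕ}
    (F : EuclideanSpace ℝ (Fin p) → EuclideanSpace ℝ (Fin p))
    (T : EuclideanSpace ℝ (Fin p) → Set (EuclideanSpace ℝ (Fin p)))
    (L ρ η : ℝ) (hρ : 0 ≤ ρ) (hLρ : 2 * L * ρ < 1)
    (hLip : ∀ x y, ‖F x - F y‖ ≤ L * ‖x - y‖)
    (hco : ∀ x1 ξ1 x2 ξ2, ξ1 ∈ T x1 → ξ2 ∈ T x2 →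
      -ρ * ‖(F x1 + ξ1) - (F x2 + ξ2)‖ ^ 2 ≤ ⟪(F x1 + ξ1) - (F x2 + ξ2), x1 - x2⟫)
    (xs ξs : EuclideanSpace ℝ (Fin p)) (hξs : ξs ∈ T xs) (hzero : F xs + ξs = 0)
    (hη0 : 2 * ρ < η) (hη1 : η ≤ 1 / L)
    (x y ξ : ℕ → EuclideanSpace ℝ (Fin p))
    (hξ : ∀ k, ξ k ∈ T (x k))
    (hy : ∀ k : ℕ, y k = x k + (1 / ((k : ℝ) + 2)) • (x 0 - x k)
        - ((1 - 1 / ((k : ℝ) + 2)) * η - 2 * ρ * (1 - 1 / ((k : ℝ) + 2)))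
            • (F (x k) + ξ k))
    (hx : ∀ k : ℕ, x (k + 1) = x k + (1 / ((k : ℝ) + 2)) • (x 0 - x k)
        - η • (F (y k) + ξ (k + 1))
        + (2 * ρ * (1 - 1 / ((k : ℝ) + 2))) • (F (x k) + ξ k)) :
    ∀ k : ℕ, ‖F (x k) + ξ k‖ ^ 2
      ≤ (4 * ‖x 0 - xs‖ ^ 2 + 2 * η * (η - 2 * ρ) * ‖F (x 0) + ξ 0‖ ^ 2)
          / ((η - 2 * ρ) ^ 2 * ((k : ℝ) + 1) ^ 2) :=
  feg_last_iterate_rate_general F T L ρ η hρ hLip hco xs ξs hξs hzero hη0 hη1 x y ξ hξ hy hx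
end

section
/- Nesterov accelerated extragradient (AEG) potential identity: let t_k = k+2, θ_k = (t_k - 1)/t_{k+1}, ν_k = t_k/t_{k+1}, and suppose z^{k+1} = x^k - γ w^k and y^{k+1} = z^{k+1} + θ_k(z^{k+1} - z^k) + ν_k(y^k - z^{k+1}) for vectors w^k. Then with b_{k+1}θ_k = b_k, the combination T := ‖z^k + t_k(y^k - z^k) - x⋆‖² - ‖z^{k+1} + t_{k+1}(y^{k+1} - z^{k+1}) - x⋆‖² + b_k⟨w^{k-1}, z^k - y^k⟩ - b_{k+1}⟨w^k, z^{k+1} - y^{k+1}⟩ equals b_k⟨w^k - w^{k-1}, z^{k+1} - z^k⟩ + b_{k+1}⟨ν_k w^k - θ_k w^{k-1}, y^k - z^{k+1}⟩. -/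
/-!
The relations `t₁ θ = t - 1` and `t₁ ν = t` make the anchor `z + t (y - z)` invariant under the
update of `y`, so the two squared norms cancel. What remains is linear in the inner products: writing
`z₁ - y₁ = -θ (z₁ - z) - ν (y - z₁)` and using `b₁ θ = b`, the two correction terms regroup into the
right-hand side.
-/

open scoped RealInnerProductSpace

theorem anchor_eq_of_extrapolation {R M : Type*} [CommRing R] [AddCommGroup M] [Module R M]
    {t t₁ θ ν : R} (hθ : t₁ * θ = t - 1) (hν : t₁ * ν = t) {z z₁ y y₁ : M}
    (hy : y₁ = z₁ + θ • (z₁ - z) + ν • (y - z₁)) :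
    z₁ + t₁ • (y₁ - z₁) = z + t • (y - z) := by
  subst hy
  calc z₁ + t₁ • (z₁ + θ • (z₁ - z) + ν • (y - z₁) - z₁)
      = z₁ + (t₁ * θ) • (z₁ - z) + (t₁ * ν) • (y - z₁) := by module
    _ = z + t • (y - z) := by rw [hθ, hν]; module

theorem inner_correction_eq_of_extrapolation {E : Type*} [NormedAddCommGroup E]
    [InnerProductSpace ℝ E] {θ ν b b₁ : ℝ} (hb : b₁ * θ = b) {w w₀ z z₁ y y₁ : E}
    (hy : y₁ = z₁ + θ • (z₁ - z) + ν • (y - z₁)) :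
    b * ⟪w₀, z - y⟫ - b₁ * ⟪w, z₁ - y₁⟫
      = b * ⟪w - w₀, z₁ - z⟫ + b₁ * ⟪ν • w - θ • w₀, y - z₁⟫ := by
  subst hy hb
  simp only [inner_sub_left, inner_sub_right, inner_add_right, inner_smul_right,
    inner_smul_left, RCLike.conj_to_real]
  ring

theorem aeg_potential_identity_general {p : ℕ} (k : ℕ) (bk bk1 : ℝ)
    (xs wkm1 wk zk zk1 yk yk1 : EuclideanSpace ℝ (Fin p))
    (hy : yk1 = zk1 + (((k : ℝ) + 1) / ((k : ℝ) + 3)) • (zk1 - zk)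
        + (((k : ℝ) + 2) / ((k : ℝ) + 3)) • (yk - zk1))
    (hb : bk1 * (((k : ℝ) + 1) / ((k : ℝ) + 3)) = bk) :
    ‖zk + ((k : ℝ) + 2) • (yk - zk) - xs‖ ^ 2
        - ‖zk1 + ((k : ℝ) + 3) • (yk1 - zk1) - xs‖ ^ 2
        + bk * ⟪wkm1, zk - yk⟫ - bk1 * ⟪wk, zk1 - yk1⟫
      = bk * ⟪wk - wkm1, zk1 - zk⟫
        + bk1 * ⟪(((k : ℝ) + 2) / ((k : ℝ) + 3)) • wk
            - (((k : ℝ) + 1) / ((k : ℝ) + 3)) • wkm1, yk - zk1⟫ := by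
  have hk : (k : ℝ) + 3 ≠ 0 := by positivity
  have hθ : ((k : ℝ) + 3) * (((k : ℝ) + 1) / ((k : ℝ) + 3)) = (k + 2) - 1 := by
    field_simp; ring
  have hν : ((k : ℝ) + 3) * (((k : ℝ) + 2) / ((k : ℝ) + 3)) = k + 2 := by
    field_simp
  rw [anchor_eq_of_extrapolation hθ hν hy, sub_self, zero_add,
    inner_correction_eq_of_extrapolation hb hy]

/-- Nesterov accelerated extragradient (AEG) potential identity. -/
theorem aeg_potential_identity {p : ℕ} (k : ℕ) (γ bk bk1 : ℝ)
    (xs xk wkm1 wk zk zk1 yk yk1 : EuclideanSpace ℝ (Fin p))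
    (hz : zk1 = xk - γ • wk)
    (hy : yk1 = zk1 + (((k : ℝ) + 1) / ((k : ℝ) + 3)) • (zk1 - zk)
        + (((k : ℝ) + 2) / ((k : ℝ) + 3)) • (yk - zk1))
    (hb : bk1 * (((k : ℝ) + 1) / ((k : ℝ) + 3)) = bk) :
    ‖zk + ((k : ℝ) + 2) • (yk - zk) - xs‖ ^ 2
        - ‖zk1 + ((k : ℝ) + 3) • (yk1 - zk1) - xs‖ ^ 2
        + bk * ⟪wkm1, zk - yk⟫ - bk1 * ⟪wk, zk1 - yk1⟫
      = bk * ⟪wk - wkm1, zk1 - zk⟫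
        + bk1 * ⟪(((k : ℝ) + 2) / ((k : ℝ) + 3)) • wk
            - (((k : ℝ) + 1) / ((k : ℝ) + 3)) • wkm1, yk - zk1⟫ :=
  aeg_potential_identity_general k bk bk1 xs wkm1 wk zk zk1 yk yk1 hy hb
end
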